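/- arXiv:1510.00399 — 4 statements merged into one kernel-verified Lean document; each statement's English description precedes it below -/
import Mathlib

section
/- Let z₁, z₂ be positive real numbers and let Γ be the sequence defined by Γ 1 = z₁, Γ 2 = z₂, and Γ n = Γ(ε(n)) · ∏_{k=1}^{⌈n/2⌉ - 1} G(n - 2k) for n ≥ 3, where ε(n) = 2 if n is even and 1 if n is odd, and G(j) = (j + z₁z₂)/(j - 1 + z₁z₂). Then for every integer n ≥ 2, Γ n · Γ(n - 1) = (n - 2) + z₁z₂ (a Catalan-type identity for consecutive terms). -/
theorem stmt_3 (z₁ z₂ : ℝ) (hz₁ : 0 < z₁) (hz₂ : 0 < z₂)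
    (ε : ℕ → ℕ) (hε : ∀ n : ℕ, ε n = if n % 2 = 0 then 2 else 1)
    (G : ℕ → ℝ) (hG : ∀ j : ℕ, 1 ≤ j → G j = ((j : ℝ) + z₁ * z₂) / ((j : ℝ) - 1 + z₁ * z₂))
    (Γ : ℕ → ℝ) (h1 : Γ 1 = z₁) (h2 : Γ 2 = z₂)
    (hΓ : ∀ n : ℕ, 3 ≤ n →
      Γ n = Γ (ε n) * ∏ k ∈ Finset.Icc 1 ((n + 1) / 2 - 1), G (n - 2 * k)) :
    ∀ n : ℕ, 2 ≤ n → Γ n * Γ (n - 1) = ((n : ℝ) - 2) + z₁ * z₂ := by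
  have key : ∀ n : ℕ, 2 ≤ n → Γ (n + 1) = Γ (n - 1) * G (n - 1) := by
    intro n hn
    rw [hΓ (n + 1) (by omega)]
    rcases Nat.lt_or_ge n 4 with h4 | h4
    · interval_cases n
      · simp [hε]
      · simp [hε]
    · have hM : (n + 1 + 1) / 2 - 1 = n / 2 := by omega
      rw [hΓ (n - 1) (by omega), hM]
      have hε' : ε (n + 1) = ε (n - 1) := by
        rw [hε, hε]; have : (n+1) % 2 = (n-1) % 2 := by omega
        rw [this]
      have hM' : (n - 1 + 1) / 2 - 1 = n / 2 - 1 := by omega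
      rw [hε', hM']
      have hsplit : ∏ k ∈ Finset.Icc 1 (n / 2), G (n + 1 - 2 * k)
          = (∏ k ∈ Finset.Icc 1 (n / 2 - 1), G (n - 1 - 2 * k)) * G (n - 1) := by
        rw [← Finset.Ico_add_one_right_eq_Icc, ← Finset.Ico_add_one_right_eq_Icc,
          Finset.prod_Ico_eq_prod_range, Finset.prod_Ico_eq_prod_range]
        have h1' : n / 2 + 1 - 1 = (n / 2 - 1) + 1 := by omega
        rw [h1', Finset.prod_range_succ']
        congr 1
        apply Finset.prod_congr rfl
        intro i hi
        simp only [Finset.mem_range] at hi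
        congr 1
        omega
      rw [hsplit]
      ring
  intro n hn
  induction n, hn using Nat.le_induction with
  | base =>
    rw [h2]
    simp [h1]
    ring
  | succ n hn ih =>
    have hk := key n hn
    have hG' := hG (n - 1) (by omega)
    have hcast : ((n - 1 : ℕ) : ℝ) = (n : ℝ) - 1 := by
      have h1' : (1:ℕ) ≤ n := by omega
      push_cast [h1']; ring
    have hn2 : (2:ℝ) ≤ (n:ℝ) := by exact_mod_cast hn
    have hne : ((n:ℝ) - 2) + z₁ * z₂ ≠ 0 := by nlinarith [mul_pos hz₁ hz₂]
    have : Γ (n + 1) * Γ n = (Γ n * Γ (n - 1)) * G (n - 1) := by rw [hk]; ring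
    rw [show n + 1 - 1 = n from rfl, this, ih, hG', hcast,
      show (n:ℝ) - 1 - 1 + z₁ * z₂ = (n:ℝ) - 2 + z₁ * z₂ from by ring,
      ← mul_div_assoc, mul_comm (((n:ℝ) - 2) + z₁ * z₂), mul_div_assoc,
      div_self hne, mul_one]
    push_cast
    ring
end

section
/- Let z₁, z₂ be positive real numbers and let Γ be the sequence defined by Γ 1 = z₁, Γ 2 = z₂, and Γ n = Γ(ε(n)) · ∏_{k=1}^{⌈n/2⌉ - 1} G(n - 2k) for n ≥ 3, where ε(n) = 2 if n is even and 1 if n is odd, and G(j) = (j + z₁z₂)/(j - 1 + z₁z₂). Then Γ solves the recurrence: for every integer n ≥ 3, Γ n = 1/Γ(n - 1) + Γ(n - 2). -/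
theorem stmt_4 (z₁ z₂ : ℝ) (hz₁ : 0 < z₁) (hz₂ : 0 < z₂)
    (ε : ℕ → ℕ) (hε : ∀ n : ℕ, ε n = if n % 2 = 0 then 2 else 1)
    (G : ℕ → ℝ) (hG : ∀ j : ℕ, 1 ≤ j → G j = ((j : ℝ) + z₁ * z₂) / ((j : ℝ) - 1 + z₁ * z₂))
    (Γ : ℕ → ℝ) (h1 : Γ 1 = z₁) (h2 : Γ 2 = z₂)
    (hΓ : ∀ n : ℕ, 3 ≤ n →
      Γ n = Γ (ε n) * ∏ k ∈ Finset.Icc 1 ((n + 1) / 2 - 1), G (n - 2 * k)) :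
    ∀ n : ℕ, 3 ≤ n → Γ n = 1 / Γ (n - 1) + Γ (n - 2) := by
  set c := z₁ * z₂ with hc
  have hcpos : 0 < c := mul_pos hz₁ hz₂
  have hden : ∀ j : ℕ, 1 ≤ j → 0 < (j : ℝ) - 1 + c := by
    intro j hj
    have : (1 : ℝ) ≤ (j : ℝ) := by exact_mod_cast hj
    linarith
  have hGpos : ∀ j : ℕ, 1 ≤ j → 0 < G j := by
    intro j hj
    rw [hG j hj]
    have hd := hden j hj
    have h1j : (1 : ℝ) ≤ (j : ℝ) := by exact_mod_cast hj
    positivity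
  -- step lemma: Γ (p+2) = Γ p * G p for p ≥ 1
  have hstep : ∀ p : ℕ, 1 ≤ p → Γ (p + 2) = Γ p * G p := by
    intro p hp
    have h3 : 3 ≤ p + 2 := by omega
    have hM : (p + 2 + 1) / 2 - 1 = (p + 1) / 2 := by omega
    have hεp : ε (p + 2) = ε p := by
      rw [hε, hε]
      have : (p + 2) % 2 = p % 2 := by omega
      rw [this]
    have key := hΓ (p + 2) h3
    rw [hM, hεp] at key
    set M := (p + 1) / 2 with hMdef
    have hM1 : 1 ≤ M := by omega
    have hprod1 : ∏ k ∈ Finset.Icc 1 M, G (p + 2 - 2 * k)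
        = ∏ i ∈ Finset.range M, G (p - 2 * i) := by
      rw [show Finset.Icc 1 M = Finset.Ico 1 (M + 1) by rw [Finset.Ico_add_one_right_eq_Icc],
        Finset.prod_Ico_eq_prod_range]
      apply Finset.prod_congr (by congr 1)
      intro i _
      congr 1
      omega
    have hsplit : ∏ i ∈ Finset.range M, G (p - 2 * i)
        = (∏ i ∈ Finset.range (M - 1), G (p - 2 * (i + 1))) * G p := by
      have : M = (M - 1) + 1 := by omega
      rw [this, Finset.prod_range_succ']
      simp
    have hΓp : Γ p = Γ (ε p) * ∏ i ∈ Finset.range (M - 1), G (p - 2 * (i + 1)) := by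
      rcases lt_or_ge p 3 with hlt | hge
      · interval_cases p
        · have : M - 1 = 0 := by omega
          rw [this]
          simp [hε]
        · have : M - 1 = 0 := by omega
          rw [this]
          simp [hε]
      · have h := hΓ p hge
        have hMm : (p + 1) / 2 - 1 = M - 1 := by omega
        rw [hMm] at h
        rw [h]
        congr 1
        rw [show Finset.Icc 1 (M - 1) = Finset.Ico 1 (M - 1 + 1) by rw [Finset.Ico_add_one_right_eq_Icc],
          Finset.prod_Ico_eq_prod_range]
        apply Finset.prod_congr (by congr 1)
        intro i _
        congr 1
        omega
    rw [key, hprod1, hsplit, ← mul_assoc, ← hΓp]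
  -- positivity of Γ
  have hΓpos : ∀ p : ℕ, 0 < Γ (p + 1) ∧ 0 < Γ (p + 2) := by
    intro p
    induction p with
    | zero => exact ⟨h1 ▸ hz₁, h2 ▸ hz₂⟩
    | succ q ih =>
      refine ⟨ih.2, ?_⟩
      have : q + 1 + 2 = (q + 1) + 2 := rfl
      rw [hstep (q + 1) (by omega)]
      exact mul_pos ih.1 (hGpos (q + 1) (by omega))
  -- key invariant
  have hprod : ∀ p : ℕ, 1 ≤ p → Γ p * Γ (p + 1) = (p : ℝ) - 1 + c := by
    intro p hp
    induction p, hp using Nat.le_induction with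
    | base => rw [h1, h2]; push_cast; ring
    | succ q hq ih =>
      have hd := hden q hq
      have hq1 : (1 : ℝ) ≤ (q : ℝ) := by exact_mod_cast hq
      have : q + 1 + 1 = q + 2 := rfl
      rw [this, hstep q hq, hG q hq]
      have hΓq : 0 < Γ q := by
        rcases Nat.exists_eq_add_of_le hq with ⟨r, hr⟩
        subst hr
        simpa [add_comm] using (hΓpos r).1
      push_cast
      field_simp
      nlinarith [ih]
  -- finish
  intro n hn
  obtain ⟨p, rfl⟩ : ∃ p, n = p + 2 := ⟨n - 2, by omega⟩
  have hp : 1 ≤ p := by omega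
  have hd := hden p hp
  have hΓp1 : 0 < Γ (p + 1) := (hΓpos p).1
  have h1p : (1 : ℝ) ≤ (p : ℝ) := by exact_mod_cast hp
  have hs := hstep p hp
  have hpr := hprod p hp
  have hΓq : 0 < Γ p := by
    rcases Nat.exists_eq_add_of_le hp with ⟨r, hr⟩
    subst hr
    simpa [add_comm] using (hΓpos r).1
  have e1 : p + 2 - 1 = p + 1 := by omega
  have e2 : p + 2 - 2 = p := by omega
  rw [e1, e2, hs, hG p hp]
  rw [div_add' _ _ _ (ne_of_gt hΓp1), eq_div_iff (ne_of_gt hΓp1)] at *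
  field_simp
  nlinarith [hpr, hΓq, hΓp1, hd]
end

section
/- Let z₁, z₂ be positive real numbers and let z : ℕ → ℝ be the sequence with z 1 = z₁, z 2 = z₂, and z (n+2) = 1/(z (n+1)) + z n for all n ≥ 1. Then for every integer n ≥ 3, z n = z(ε(n)) · ∏_{k=1}^{⌈n/2⌉ - 1} (n - 2k + z₁z₂)/(n - 2k - 1 + z₁z₂), where ε(n) = 2 if n is even and 1 if n is odd. That is, the recurrence has this closed-form solution. -/
theorem stmt_5 (z₁ z₂ : ℝ) (hz₁ : 0 < z₁) (hz₂ : 0 < z₂)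
    (ε : ℕ → ℕ) (hε : ∀ n : ℕ, ε n = if n % 2 = 0 then 2 else 1)
    (z : ℕ → ℝ) (h1 : z 1 = z₁) (h2 : z 2 = z₂)
    (hrec : ∀ n : ℕ, 1 ≤ n → z (n + 2) = 1 / z (n + 1) + z n) :
    ∀ n : ℕ, 3 ≤ n →
      z n = z (ε n) * ∏ k ∈ Finset.Icc 1 ((n + 1) / 2 - 1),
        (((n - 2 * k : ℕ) : ℝ) + z₁ * z₂) / (((n - 2 * k : ℕ) : ℝ) - 1 + z₁ * z₂) := by
  have hpos : ∀ n : ℕ, 1 ≤ n → 0 < z n := by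
    intro n hn
    induction n using Nat.strong_induction_on with
    | _ n ih =>
      match n, hn with
      | 1, _ => rw [h1]; exact hz₁
      | 2, _ => rw [h2]; exact hz₂
      | (m+3), _ =>
        have h := hrec (m+1) (by omega)
        have p1 : 0 < z (m+2) := ih (m+2) (by omega) (by omega)
        have p2 : 0 < z (m+1) := ih (m+1) (by omega) (by omega)
        rw [show m+3 = m+1+2 from rfl, h]
        positivity
  set p := z₁ * z₂ with hp
  have hppos : 0 < p := mul_pos hz₁ hz₂
  have hprod : ∀ n : ℕ, 1 ≤ n → z n * z (n+1) = (n : ℝ) - 1 + p := by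
    intro n hn
    induction n with
    | zero => omega
    | succ m ih =>
      rcases Nat.lt_or_ge m 1 with hm | hm
      · interval_cases m
        rw [h1, h2]; push_cast; ring
      · have hz1 := (hpos (m+1) (by omega)).ne'
        have e := hrec m hm
        rw [e, mul_add, mul_one_div, div_self hz1, mul_comm (z (m+1)) (z m), ih hm]
        push_cast; ring
  have hstep : ∀ n : ℕ, 1 ≤ n →
      z (n+2) = z n * (((n:ℝ) + p)/((n:ℝ) - 1 + p)) := by
    intro n hn
    have hz1 := hpos (n+1) (by omega)
    have hn1 : (1:ℝ) ≤ n := by exact_mod_cast hn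
    have hd : (0:ℝ) < (n:ℝ) - 1 + p := by linarith
    have e1 := hprod n hn
    have e2 := hprod (n+1) (by omega)
    push_cast at e2
    have key : z (n+1) * (z (n+2) * ((n:ℝ) - 1 + p)) =
        z (n+1) * (z n * (((n:ℝ) + p))) := by nlinarith [e1, e2]
    have key2 := mul_left_cancel₀ hz1.ne' key
    field_simp
    linarith [key2]
  have main : ∀ m : ℕ, ∀ r : ℕ, 1 ≤ r →
      z (r + 2*m) = z r * ∏ k ∈ Finset.range m,
        ((((r + 2*k : ℕ):ℝ)) + p)/((((r + 2*k : ℕ):ℝ)) - 1 + p) := by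
    intro m
    induction m with
    | zero => simp
    | succ m ih =>
      intro r h1r
      have hs := hstep (r + 2*m) (by omega)
      rw [show r + 2*(m+1) = (r + 2*m) + 2 by ring, hs, ih r h1r,
          Finset.prod_range_succ]
      push_cast
      ring
  intro n hn
  rcases Nat.even_or_odd n with he | ho
  · -- n even, ε n = 2, n = 2 + 2*m
    have hε2 : ε n = 2 := by rw [hε]; simp [Nat.even_iff.mp he]
    obtain ⟨m, hm⟩ : ∃ m, n = 2 + 2*m := ⟨n/2 - 1, by have := Nat.even_iff.mp he; omega⟩
    have hM : (n + 1) / 2 - 1 = m := by omega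
    rw [hε2, hM, hm, main m 2 (by norm_num)]
    congr 1
    rw [← Finset.Ico_add_one_right_eq_Icc, Finset.prod_Ico_eq_prod_range]
    rw [← Finset.prod_range_reflect]
    apply Finset.prod_congr (by norm_num)
    intro j hj
    have hjm : j < m := Finset.mem_range.mp hj
    have : 2 + 2*m - 2*(1+j) = 2 + 2*(m - 1 - j) := by omega
    rw [this]
  · -- n odd, ε n = 1, n = 1 + 2*m
    have hε1 : ε n = 1 := by rw [hε]; simp [Nat.odd_iff.mp ho]
    obtain ⟨m, hm⟩ : ∃ m, n = 1 + 2*m := ⟨n/2, by have := Nat.odd_iff.mp ho; omega⟩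
    have hM : (n + 1) / 2 - 1 = m := by omega
    rw [hε1, hM, hm, main m 1 (by norm_num)]
    congr 1
    rw [← Finset.Ico_add_one_right_eq_Icc, Finset.prod_Ico_eq_prod_range]
    rw [← Finset.prod_range_reflect]
    apply Finset.prod_congr (by norm_num)
    intro j hj
    have hjm : j < m := Finset.mem_range.mp hj
    have : 1 + 2*m - 2*(1+j) = 1 + 2*(m - 1 - j) := by omega
    rw [this]
end

section
/- Let z₁, z₂ be positive real numbers and let z : ℕ → ℝ be the sequence with z 1 = z₁, z 2 = z₂, and z (n+2) = 1/(z (n+1)) + z n for all n ≥ 1. Then for every integer n ≥ 2, z n · z (n - 1) = (n - 2) + z₁z₂. -/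
theorem stmt_8 (z₁ z₂ : ℝ) (hz₁ : 0 < z₁) (hz₂ : 0 < z₂)
    (z : ℕ → ℝ) (h1 : z 1 = z₁) (h2 : z 2 = z₂)
    (hrec : ∀ n : ℕ, 1 ≤ n → z (n + 2) = 1 / z (n + 1) + z n) :
    ∀ n : ℕ, 2 ≤ n → z n * z (n - 1) = ((n : ℝ) - 2) + z₁ * z₂ := by
  have hpos : ∀ n : ℕ, 1 ≤ n → 0 < z n := by
    intro n hn
    induction n using Nat.strong_induction_on with
    | _ n ih =>
      match n, hn with
      | 1, _ => rw [h1]; exact hz₁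
      | 2, _ => rw [h2]; exact hz₂
      | (m + 3), _ =>
        have h1' : 1 ≤ m + 1 := by omega
        rw [show m + 3 = (m + 1) + 2 from rfl, hrec (m + 1) h1']
        have p1 := ih (m + 1) (by omega) (by omega)
        have p2 := ih (m + 2) (by omega) (by omega)
        positivity
  intro n hn
  induction n, hn using Nat.le_induction with
  | base => simp [h1, h2]; ring
  | succ n hn ih =>
    have hz : z (n + 1) = 1 / z n + z (n - 1) := by
      have := hrec (n - 1) (by omega)
      have e1 : n - 1 + 2 = n + 1 := by omega
      have e2 : n - 1 + 1 = n := by omega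
      rwa [e1, e2] at this
    have hzn : 0 < z n := hpos n (by omega)
    have : z (n + 1) * z n = 1 + z n * z (n - 1) := by
      rw [hz]; field_simp
    rw [show n + 1 - 1 = n from rfl, this, ih]
    push_cast
    ring
end
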